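/- arXiv:2206.07166 — 3 statements merged into one kernel-verified Lean document; each statement's English description precedes it below -/
import Mathlib

section
/- (Theorem 3.1, occupancy-matching duality.) Let κ̂ be a Markov kernel on a measurable space X, let μ̂ be a probability measure invariant for κ̂, and let μ_b be a probability measure on X. Let G be a nonempty class of measurable functions g : X → ℝ with |g| ≤ G_max pointwise, and suppose Φ assigns to each g ∈ G a bounded measurable function Φg : X → ℝ satisfying the Bellman equation Φg(x) = g(x) + (κ̂ Φg)(x) − ∫ g dμ̂ for all x ∈ X. Then sup_{g ∈ G} | ∫ g dμ_b − ∫ g dμ̂ | = sup_{g ∈ G} | ∫ Φg dμ_b − ∫ (κ̂ Φg)(x) dμ_b(x) |. That is, the integral probability metric D_G(μ_b, μ̂) equals the Bellman-residual objective R(μ_b, κ̂) := sup over the class of differential value functions {Φg : g ∈ G} of |E_{x∼μ_b}[f(x)] − E_{x∼μ_b, x'∼κ̂(x)}[f(x')]|. -/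
open MeasureTheory ProbabilityTheory

/-- Theorem 3.1 (occupancy-matching duality): the integral probability metric
`D_G(μ_b, μ̂)` between the data distribution `μ_b` and the stationary distribution `μ̂`
of the learned dynamics `κ̂` equals the Bellman-residual objective over the class of
differential value functions `{Φg : g ∈ G}`. -/
theorem ipm_eq_bellman_residual
    {X : Type*} [MeasurableSpace X]
    (κhat : Kernel X X) [IsMarkovKernel κhat]
    (μhat : Measure X) [IsProbabilityMeasure μhat]
    (h_inv : Kernel.Invariant κhat μhat)
    (μb : Measure X) [IsProbabilityMeasure μb]
    (G : Set (X → ℝ)) (hG_ne : G.Nonempty)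
    (hG_meas : ∀ g ∈ G, Measurable g)
    (Gmax : ℝ) (hG_bdd : ∀ g ∈ G, ∀ x, |g x| ≤ Gmax)
    (Φ : (X → ℝ) → (X → ℝ))
    (hΦ_meas : ∀ g ∈ G, Measurable (Φ g))
    (hΦ_bdd : ∀ g ∈ G, ∃ C : ℝ, ∀ x, |Φ g x| ≤ C)
    (h_bellman : ∀ g ∈ G, ∀ x,
      Φ g x = g x + (∫ x', Φ g x' ∂(κhat x)) - ∫ z, g z ∂μhat) :
    (⨆ g : G, |(∫ x, (g : X → ℝ) x ∂μb) - ∫ x, (g : X → ℝ) x ∂μhat|)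
      = ⨆ g : G, |(∫ x, Φ g x ∂μb) - ∫ x, ∫ x', Φ (g : X → ℝ) x' ∂(κhat x) ∂μb| := by
  refine iSup_congr fun ⟨g, hg⟩ => ?_
  simp only
  obtain ⟨C, hC⟩ := hΦ_bdd g hg
  -- integrability facts
  have hgi : Integrable g μb := by
    refine ⟨(hG_meas g hg).aestronglyMeasurable, ?_⟩
    exact (hasFiniteIntegral_const Gmax).mono'
      (Filter.Eventually.of_forall fun x => by
        simpa [Real.norm_eq_abs] using hG_bdd g hg x)
  have hΦi : Integrable (Φ g) μb := by
    refine ⟨(hΦ_meas g hg).aestronglyMeasurable, ?_⟩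
    exact (hasFiniteIntegral_const C).mono'
      (Filter.Eventually.of_forall fun x => by
        simpa [Real.norm_eq_abs] using hC x)
  have hκmeas : StronglyMeasurable (fun x => ∫ x', Φ g x' ∂(κhat x)) := by
    exact StronglyMeasurable.integral_kernel_prod_right
      (f := fun _ y => Φ g y)
      ((hΦ_meas g hg).comp measurable_snd).stronglyMeasurable
  have hκi : Integrable (fun x => ∫ x', Φ g x' ∂(κhat x)) μb := by
    refine ⟨hκmeas.aestronglyMeasurable, ?_⟩
    refine (hasFiniteIntegral_const C).mono'
      (Filter.Eventually.of_forall fun x => ?_)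
    calc ‖∫ x', Φ g x' ∂(κhat x)‖ ≤ C * ((κhat x) Set.univ).toReal :=
          norm_integral_le_of_norm_le_const
            (Filter.Eventually.of_forall fun y => by
              simpa [Real.norm_eq_abs] using hC y)
      _ = C := by simp
  -- key identity
  have key : (∫ x, g x ∂μb) - ∫ x, g x ∂μhat
      = (∫ x, Φ g x ∂μb) - ∫ x, ∫ x', Φ g x' ∂(κhat x) ∂μb := by
    have hfun : ∀ x, g x = Φ g x - (∫ x', Φ g x' ∂(κhat x)) + ∫ z, g z ∂μhat := by
      intro x
      have := h_bellman g hg x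
      linarith
    have : ∫ x, g x ∂μb
        = ∫ x, (Φ g x - (∫ x', Φ g x' ∂(κhat x)) + ∫ z, g z ∂μhat) ∂μb := by
      exact integral_congr_ae (Filter.Eventually.of_forall hfun)
    have h2 : ∫ x, (Φ g x - (∫ x', Φ g x' ∂(κhat x)) + ∫ z, g z ∂μhat) ∂μb
        = (∫ x, Φ g x ∂μb) - (∫ x, ∫ x', Φ g x' ∂(κhat x) ∂μb) + ∫ z, g z ∂μhat := by
      have hsub : Integrable (fun x => Φ g x - ∫ x', Φ g x' ∂(κhat x)) μb := hΦi.sub hκi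
      rw [integral_add hsub (integrable_const _), integral_sub hΦi hκi,
        integral_const]
      simp
    rw [this, h2]
    ring
  rw [key]
end

section
/- Let κ̂ and κ* be Markov kernels on a measurable space X, let μ̂ be a probability measure invariant for κ̂, and let μ* be a probability measure invariant for κ*. Let g : X → ℝ be bounded measurable and let f : X → ℝ be bounded measurable satisfying f(x) = g(x) + (κ̂f)(x) − ∫ g dμ̂ for all x ∈ X. Then ∫ g dμ̂ − ∫ g dμ* = ∫ ( (κ̂f)(x) − (κ*f)(x) ) dμ*(x). -/
/-!
Integrating the Bellman equation against `μ*` gives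
`∫ κ̂f dμ* = ∫ f dμ* - ∫ g dμ* + ∫ g dμ̂`, while invariance of `μ*` gives `∫ κ*f dμ* = ∫ f dμ*`;
subtracting, the `∫ f dμ*` terms cancel.
-/

open MeasureTheory ProbabilityTheory

namespace ProbabilityTheory.Kernel

variable {X E : Type*} [MeasurableSpace X] [NormedAddCommGroup E] [NormedSpace ℝ E]
  {κ : Kernel X X} {μ : Measure X} {f : X → E}

lemma Invariant.integrable_integral (hκ : Invariant κ μ) (hf : Integrable f μ) :
    Integrable (fun x ↦ ∫ y, f y ∂κ x) μ := by
  rw [← hκ.def, Measure.comp_eq_comp_const_apply] at hf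
  simpa using hf.integral_comp

lemma Invariant.integral_integral_eq (hκ : Invariant κ μ) (hf : Integrable f μ) :
    ∫ x, ∫ y, f y ∂κ x ∂μ = ∫ x, f x ∂μ := by
  conv_rhs => rw [← hκ.def, Measure.comp_eq_comp_const_apply]
  rw [← hκ.def, Measure.comp_eq_comp_const_apply] at hf
  simpa using (integral_comp hf).symm

end ProbabilityTheory.Kernel

theorem integral_diff_eq_integral_model_discrepancy_general
    {X : Type*} [MeasurableSpace X]
    (κhat κstar : Kernel X X)
    (μhat : Measure X)
    (μstar : Measure X) [IsProbabilityMeasure μstar]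
    (h_inv_star : Kernel.Invariant κstar μstar)
    (g f : X → ℝ) (hg_meas : Measurable g) (hf_meas : Measurable f)
    (Cg : ℝ) (hg_bdd : ∀ x, |g x| ≤ Cg)
    (Cf : ℝ) (hf_bdd : ∀ x, |f x| ≤ Cf)
    (h_bellman : ∀ x, f x = g x + (∫ x', f x' ∂(κhat x)) - ∫ z, g z ∂μhat) :
    (∫ x, g x ∂μhat) - ∫ x, g x ∂μstar
      = ∫ x, ((∫ x', f x' ∂(κhat x)) - ∫ x', f x' ∂(κstar x)) ∂μstar := by
  have hf_int : Integrable f μstar := .of_bound hf_meas.aestronglyMeasurable Cf (ae_of_all _ hf_bdd)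
  have hg_int : Integrable g μstar := .of_bound hg_meas.aestronglyMeasurable Cg (ae_of_all _ hg_bdd)
  have hκhat_f : (fun x ↦ ∫ x', f x' ∂(κhat x)) = fun x ↦ f x - g x + ∫ z, g z ∂μhat :=
    funext fun x ↦ by linarith [h_bellman x]
  have hκhat_f_int : Integrable (fun x ↦ ∫ x', f x' ∂(κhat x)) μstar := by
    rw [hκhat_f]
    exact (hf_int.sub hg_int).add (integrable_const _)
  rw [integral_sub hκhat_f_int (h_inv_star.integrable_integral hf_int),
    h_inv_star.integral_integral_eq hf_int, hκhat_f,
    integral_add (f := fun x ↦ f x - g x) (hf_int.sub hg_int) (integrable_const _),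
    integral_sub hf_int hg_int,
    integral_const, probReal_univ, one_smul]
  ring

/-- If `μ̂` is invariant for `κ̂`, `μ*` is invariant for `κ*`, and `f` is the differential
value function of the bounded measurable reward `g` under `κ̂` (i.e. it satisfies the
Bellman equation `f = g + κ̂f − ∫ g dμ̂`), then
`∫ g dμ̂ − ∫ g dμ* = ∫ ((κ̂f)(x) − (κ*f)(x)) dμ*(x)`. -/
theorem integral_diff_eq_integral_model_discrepancy
    {X : Type*} [MeasurableSpace X]
    (κhat κstar : Kernel X X) [IsMarkovKernel κhat] [IsMarkovKernel κstar]
    (μhat : Measure X) [IsProbabilityMeasure μhat]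
    (h_inv_hat : Kernel.Invariant κhat μhat)
    (μstar : Measure X) [IsProbabilityMeasure μstar]
    (h_inv_star : Kernel.Invariant κstar μstar)
    (g f : X → ℝ) (hg_meas : Measurable g) (hf_meas : Measurable f)
    (Cg : ℝ) (hg_bdd : ∀ x, |g x| ≤ Cg)
    (Cf : ℝ) (hf_bdd : ∀ x, |f x| ≤ Cf)
    (h_bellman : ∀ x, f x = g x + (∫ x', f x' ∂(κhat x)) - ∫ z, g z ∂μhat) :
    (∫ x, g x ∂μhat) - ∫ x, g x ∂μstar
      = ∫ x, ((∫ x', f x' ∂(κhat x)) - ∫ x', f x' ∂(κstar x)) ∂μstar :=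
  integral_diff_eq_integral_model_discrepancy_general κhat κstar μhat μstar h_inv_star g f hg_meas
    hf_meas Cg hg_bdd Cf hf_bdd h_bellman
end

section
/- (Theorem 3.2, model-error bound.) Let κ̂ and κ* be Markov kernels on a measurable space X, let μ̂ be a probability measure invariant for κ̂, let μ* be a probability measure invariant for κ*, and let μ_b be a probability measure on X. Let G be a nonempty class of measurable functions g : X → ℝ with |g| ≤ G_max pointwise. Suppose Φ assigns to each g ∈ G a measurable function Φg with |Φg| ≤ F pointwise satisfying Φg(x) = g(x) + (κ̂ Φg)(x) − ∫ g dμ̂ for all x; for g ∈ G set e_g(x) := (κ̂ Φg)(x) − (κ* Φg)(x); and suppose Ψ assigns to each g ∈ G a bounded measurable function Ψg satisfying Ψg(x) = e_g(x) + (κ* Ψg)(x) − ∫ e_g dμ* for all x. Assume KL(κ*(x)‖κ̂(x)) < ∞ for μ_b-almost every x and that x ↦ √(2 · KL(κ*(x)‖κ̂(x))) is μ_b-integrable. Then sup_{g ∈ G} | ∫ g dμ̂ − ∫ g dμ* | ≤ F · ∫ √(2 · KL(κ*(x)‖κ̂(x))) dμ_b(x) + sup_{g ∈ G} | ∫ Ψg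 dμ_b − ∫ (κ* Ψg)(x) dμ_b(x) |. -/
/-!
Integrating the Poisson equation of `Φ g` against `μ*`, and using that `μ*` is `κ*`-invariant,
gives `∫ g dμ̂ - ∫ g dμ* = ∫ e_g dμ*`; integrating the Poisson equation of `Ψ g` against `μ_b`
turns this into `∫ e_g dμ_b` minus the Bellman residual of `Ψ g`. Pointwise,
`|e_g x| ≤ F ‖κ*(x) - κ̂(x)‖₁ ≤ F √(2 KL(κ*(x)‖κ̂(x)))` by Pinsker's inequality. Pinsker follows by
integrating `|ρ - 1| ≤ t (ρ + 2) / 3 + (ρ log ρ + 1 - ρ) / (2t)` (AM-GM applied to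
`3 (x - 1)² ≤ (2x + 4) (x log x + 1 - x)`) against `κ̂(x)` and optimising over `t > 0`.
-/

open MeasureTheory ProbabilityTheory Classical
open scoped ENNReal

/-- The Kullback–Leibler divergence `KL(P‖Q)`: equal to `∫ log (dP/dQ) dP` when `P ≪ Q`
and this integral makes sense, and `+∞` otherwise. -/
noncomputable def KLdiv {S : Type*} [MeasurableSpace S] (P Q : Measure S) : ℝ≥0∞ :=
  if P ≪ Q ∧ Integrable (fun s => Real.log ((P.rnDeriv Q s).toReal)) P then
    ENNReal.ofReal (∫ s, Real.log ((P.rnDeriv Q s).toReal) ∂P)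
  else ⊤

open Set Real InformationTheory

lemma monotoneOn_add_one_mul_log_sub :
    MonotoneOn (fun x : ℝ => (x + 1) * log x - 2 * (x - 1)) (Ioi 0) := by
  refine monotoneOn_of_hasDerivWithinAt_nonneg (f' := fun x => klFun x / x) (convex_Ioi 0)
    (fun x hx => ?_) (fun x hx => ?_) (fun x hx => ?_)
  all_goals simp only [interior_Ioi, mem_Ioi] at hx
  · have := continuousAt_log hx.ne'
    exact ContinuousAt.continuousWithinAt (by fun_prop)
  · have h := (((hasDerivAt_id x).add_const 1).mul (hasDerivAt_log hx.ne')).sub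
      (((hasDerivAt_id x).sub_const 1).const_mul 2)
    refine (h.congr_deriv ?_).hasDerivWithinAt
    rw [klFun_apply]
    field_simp
    simp only [id_eq]
    ring
  · exact div_nonneg (klFun_nonneg hx.le) hx.le

lemma three_mul_sq_sub_one_le_mul_klFun {x : ℝ} (hx : 0 ≤ x) :
    3 * (x - 1) ^ 2 ≤ (2 * x + 4) * klFun x := by
  set g : ℝ → ℝ := fun x => (2 * x + 4) * klFun x - 3 * (x - 1) ^ 2
  have hg' : ∀ x ≠ 0, HasDerivAt g (4 * ((x + 1) * log x - 2 * (x - 1))) x := fun x hx => by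
    refine ((((hasDerivAt_id x).const_mul 2).add_const 4).mul (hasDerivAt_klFun hx)).sub
      ((((hasDerivAt_id x).sub_const 1).pow 2).const_mul 3) |>.congr_deriv ?_
    simp only [klFun_apply, id]
    ring
  have hu := monotoneOn_add_one_mul_log_sub
  have hmin : IsMinOn g (Ici 0) 1 := by
    refine isMinOn_Ici_of_deriv (by fun_prop) (by fun_prop)
      (fun y hy => (hg' y hy.1.ne').differentiableAt.differentiableWithinAt)
      (fun y hy => (hg' y (one_pos.trans hy).ne').differentiableAt.differentiableWithinAt)
      (fun y hy => ?_) (fun y hy => ?_)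
    · have := hu hy.1 (mem_Ioi.2 one_pos) hy.2.le
      simp only [log_one, mul_zero, sub_self] at this
      rw [(hg' y hy.1.ne').deriv]
      linarith
    · have := hu (mem_Ioi.2 one_pos) (mem_Ioi.2 (one_pos.trans hy)) hy.le
      simp only [log_one, mul_zero, sub_self] at this
      rw [(hg' y (one_pos.trans hy).ne').deriv]
      linarith
  have h1 : g 1 = 0 := by simp [g, klFun_one]
  simpa only [h1, g, sub_nonneg, mem_ofPred_eq] using hmin (mem_Ici.2 hx)

lemma abs_sub_one_le_add_klFun_div {x t : ℝ} (hx : 0 ≤ x) (ht : 0 < t) :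
    |x - 1| ≤ t / 3 * (x + 2) + klFun x / (2 * t) := by
  have hsq := three_mul_sq_sub_one_le_mul_klFun hx
  have hk := klFun_nonneg hx
  rw [show t / 3 * (x + 2) + klFun x / (2 * t) = (2 * t ^ 2 * (x + 2) + 3 * klFun x) / (6 * t) by
    field_simp; ring, le_div_iff₀ (by positivity)]
  -- AM-GM for `2 t² (x + 2)` and `3 klFun x`
  have : (6 * t * |x - 1|) ^ 2 ≤ (2 * t ^ 2 * (x + 2) + 3 * klFun x) ^ 2 := by
    rw [mul_pow, sq_abs]
    nlinarith [sq_nonneg (2 * t ^ 2 * (x + 2) - 3 * klFun x),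
      mul_le_mul_of_nonneg_left hsq (sq_nonneg t)]
  linarith [abs_le_of_sq_le_sq' this (by positivity)]

lemma le_sqrt_two_mul_of_forall_le_add_div {E K : ℝ} (hK : 0 ≤ K)
    (h : ∀ t > 0, E ≤ t + K / (2 * t)) : E ≤ √(2 * K) := by
  rcases hK.eq_or_lt with rfl | hK
  · simpa using le_of_forall_pos_le_add fun t ht => by simpa using h t ht
  · have ht : 0 < √(K / 2) := sqrt_pos.2 (by positivity)
    have hsq : √(K / 2) ^ 2 = K / 2 := sq_sqrt (by positivity)
    have hsqrt : √(2 * K) = 2 * √(K / 2) := by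
      rw [show 2 * K = 2 ^ 2 * (K / 2) by ring, sqrt_mul (by norm_num), sqrt_sq (by norm_num)]
    calc E ≤ √(K / 2) + K / (2 * √(K / 2)) := h _ ht
      _ = √(2 * K) := by rw [hsqrt]; field_simp; linarith

section BoundedFunctions

variable {S : Type*} [MeasurableSpace S] {ν : Measure S} {f : S → ℝ} {C : ℝ}

lemma integrable_of_forall_abs_le [IsFiniteMeasure ν] (hf : Measurable f)
    (hC : ∀ x, |f x| ≤ C) : Integrable f ν :=
  .of_bound hf.aestronglyMeasurable C (ae_of_all _ hC)

lemma abs_integral_le_of_forall_abs_le [IsProbabilityMeasure ν] (hC : ∀ x, |f x| ≤ C) :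
    |∫ x, f x ∂ν| ≤ C := by
  simpa using norm_integral_le_of_norm_le_const (μ := ν) (f := f) (C := C) (ae_of_all _ hC)

end BoundedFunctions

section Pinsker

variable {S : Type*} [MeasurableSpace S] {P Q : Measure S}

lemma KLdiv_eq_klDiv [IsProbabilityMeasure P] [IsProbabilityMeasure Q] :
    KLdiv P Q = klDiv P Q := by
  rw [KLdiv, klDiv_def]
  simp [llr_def]

lemma integral_abs_rnDeriv_sub_one_le_sqrt_klDiv [IsProbabilityMeasure P]
    [IsProbabilityMeasure Q] (h : klDiv P Q ≠ ∞) :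
    ∫ x, |(P.rnDeriv Q x).toReal - 1| ∂Q ≤ √(2 * (klDiv P Q).toReal) := by
  obtain ⟨hPQ, hllr⟩ := klDiv_ne_top_iff.1 h
  set ρ : S → ℝ := fun x => (P.rnDeriv Q x).toReal
  have hρ : Integrable ρ Q := Measure.integrable_toReal_rnDeriv
  have hρ1 : ∫ x, ρ x ∂Q = 1 := by simp [ρ, Measure.integral_toReal_rnDeriv hPQ]
  have hkl : Integrable (fun x => klFun (ρ x)) Q := (integrable_klFun_rnDeriv_iff hPQ).2 hllr
  refine le_sqrt_two_mul_of_forall_le_add_div ENNReal.toReal_nonneg fun t ht => ?_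
  have hlin : Integrable (fun x => t / 3 * (ρ x + 2)) Q :=
    (hρ.add (integrable_const 2)).const_mul _
  calc ∫ x, |ρ x - 1| ∂Q ≤ ∫ x, (t / 3 * (ρ x + 2) + klFun (ρ x) / (2 * t)) ∂Q :=
        integral_mono (hρ.sub (integrable_const 1)).abs (hlin.add (hkl.div_const _))
          fun x => abs_sub_one_le_add_klFun_div ENNReal.toReal_nonneg ht
    _ = t + (klDiv P Q).toReal / (2 * t) := by
        rw [integral_add hlin (hkl.div_const _), integral_const_mul,
          integral_add hρ (integrable_const 2), integral_div, hρ1,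
          toReal_klDiv_eq_integral_klFun hPQ]
        simp only [integral_const, probReal_univ, smul_eq_mul, one_mul]
        ring

lemma abs_integral_sub_integral_le_mul_integral_abs_rnDeriv_sub_one [IsFiniteMeasure P]
    [IsFiniteMeasure Q] (hPQ : P ≪ Q) {f : S → ℝ} (hf : Measurable f) {F : ℝ}
    (hfF : ∀ x, |f x| ≤ F) :
    |∫ x, f x ∂P - ∫ x, f x ∂Q| ≤ F * ∫ x, |(P.rnDeriv Q x).toReal - 1| ∂Q := by
  have hρ : Integrable (fun x => (P.rnDeriv Q x).toReal - 1) Q :=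
    Measure.integrable_toReal_rnDeriv.sub (integrable_const 1)
  have hρf : Integrable (fun x => (P.rnDeriv Q x).toReal * f x) Q :=
    Measure.integrable_toReal_rnDeriv.mul_bdd hf.aestronglyMeasurable (ae_of_all _ hfF)
  calc |∫ x, f x ∂P - ∫ x, f x ∂Q| = |∫ x, ((P.rnDeriv Q x).toReal - 1) * f x ∂Q| := by
        rw [← integral_toReal_rnDeriv_mul hPQ,
          ← integral_sub hρf (integrable_of_forall_abs_le hf hfF)]
        congr 2 with x
        ring
    _ ≤ ∫ x, F * |(P.rnDeriv Q x).toReal - 1| ∂Q :=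
        norm_integral_le_of_norm_le (hρ.abs.const_mul F) (ae_of_all _ fun x => by
          rw [Real.norm_eq_abs, abs_mul, mul_comm]
          exact mul_le_mul_of_nonneg_right (hfF x) (abs_nonneg _))
    _ = F * ∫ x, |(P.rnDeriv Q x).toReal - 1| ∂Q := integral_const_mul _ _

lemma abs_integral_sub_integral_le_mul_sqrt_KLdiv [IsProbabilityMeasure P]
    [IsProbabilityMeasure Q] (h : KLdiv P Q ≠ ∞) {f : S → ℝ} (hf : Measurable f) {F : ℝ}
    (hF : 0 ≤ F) (hfF : ∀ x, |f x| ≤ F) :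
    |∫ x, f x ∂P - ∫ x, f x ∂Q| ≤ F * √(2 * (KLdiv P Q).toReal) := by
  rw [KLdiv_eq_klDiv] at h ⊢
  exact (abs_integral_sub_integral_le_mul_integral_abs_rnDeriv_sub_one
    (klDiv_ne_top_iff.1 h).1 hf hfF).trans
    (mul_le_mul_of_nonneg_left (integral_abs_rnDeriv_sub_one_le_sqrt_klDiv h) hF)

end Pinsker

section Kernel

variable {X : Type*} [MeasurableSpace X] {κ κ' : Kernel X X} {f : X → ℝ} {C : ℝ}

lemma integral_comp_eq_integral_integral {μ : Measure X} [SFinite μ] [IsSFiniteKernel κ]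
    (hf : Integrable f (κ ∘ₘ μ)) : ∫ y, f y ∂(κ ∘ₘ μ) = ∫ x, ∫ y, f y ∂κ x ∂μ := by
  have hf' : AEStronglyMeasurable f ((μ ⊗ₘ κ).map Prod.snd) := by
    rw [← Measure.snd, Measure.snd_compProd]
    exact hf.1
  rw [← Measure.integral_compProd ((Measure.integrable_compProd_snd_iff hf.1).2 hf),
    ← Measure.snd_compProd μ κ, Measure.snd, integral_map measurable_snd.aemeasurable hf']

lemma ProbabilityTheory.Kernel.Invariant.integral_integral {μ : Measure X} [SFinite μ]
    [IsSFiniteKernel κ] (h : κ.Invariant μ) (hf : Integrable f μ) :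
    ∫ x, ∫ y, f y ∂κ x ∂μ = ∫ x, f x ∂μ := by
  rw [← integral_comp_eq_integral_integral (h.symm ▸ hf), h]

lemma measurable_integral_kernel (hf : Measurable f) : Measurable fun x => ∫ y, f y ∂κ x :=
  hf.stronglyMeasurable.integral_kernel.measurable

lemma integrable_integral_kernel [IsMarkovKernel κ] (ν : Measure X) [IsFiniteMeasure ν]
    (hf : Measurable f) (hC : ∀ x, |f x| ≤ C) : Integrable (fun x => ∫ y, f y ∂κ x) ν :=
  integrable_of_forall_abs_le (measurable_integral_kernel hf)
    fun _ => abs_integral_le_of_forall_abs_le hC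

lemma integral_eq_of_poisson_eq [IsMarkovKernel κ] (ν : Measure X) [IsProbabilityMeasure ν]
    {r : X → ℝ} {c : ℝ} (hf : Measurable f) (hC : ∀ x, |f x| ≤ C)
    (hpoisson : ∀ x, f x = r x + ∫ y, f y ∂κ x - c) :
    ∫ x, r x ∂ν = ∫ x, f x ∂ν - ∫ x, ∫ y, f y ∂κ x ∂ν + c := by
  have hfν : Integrable f ν := integrable_of_forall_abs_le hf hC
  have hκf := integrable_integral_kernel (κ := κ) ν hf hC
  calc ∫ x, r x ∂ν = ∫ x, (f x - ∫ y, f y ∂κ x + c) ∂ν :=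
        integral_congr_ae (ae_of_all _ fun x => by linarith [hpoisson x])
    _ = ∫ x, f x ∂ν - ∫ x, ∫ y, f y ∂κ x ∂ν + c := by
        rw [integral_add (by exact hfν.sub hκf) (integrable_const c), integral_sub hfν hκf]
        simp

noncomputable def modelDiscrepancy (κ κ' : Kernel X X) (f : X → ℝ) (x : X) : ℝ :=
  ∫ y, f y ∂κ x - ∫ y, f y ∂κ' x

variable [IsMarkovKernel κ] [IsMarkovKernel κ']

lemma abs_modelDiscrepancy_le (hC : ∀ x, |f x| ≤ C) (x : X) :
    |modelDiscrepancy κ κ' f x| ≤ 2 * C := by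
  unfold modelDiscrepancy
  linarith [abs_sub (∫ y, f y ∂κ x) (∫ y, f y ∂κ' x),
    abs_integral_le_of_forall_abs_le (ν := κ x) hC, abs_integral_le_of_forall_abs_le (ν := κ' x) hC]

lemma sub_integral_eq_integral_modelDiscrepancy {μ : Measure X} [IsProbabilityMeasure μ]
    (h_inv : κ'.Invariant μ) {g : X → ℝ} {c : ℝ} (hf : Measurable f) (hC : ∀ x, |f x| ≤ C)
    (hpoisson : ∀ x, f x = g x + ∫ y, f y ∂κ x - c) :
    c - ∫ x, g x ∂μ = ∫ x, modelDiscrepancy κ κ' f x ∂μ := by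
  unfold modelDiscrepancy
  rw [integral_eq_of_poisson_eq μ hf hC hpoisson,
    integral_sub (integrable_integral_kernel μ hf hC) (integrable_integral_kernel μ hf hC),
    h_inv.integral_integral (integrable_of_forall_abs_le hf hC)]
  ring

lemma abs_integral_modelDiscrepancy_le {ν : Measure X} [IsProbabilityMeasure ν]
    (h_fin : ∀ᵐ x ∂ν, KLdiv (κ' x) (κ x) < ⊤)
    (h_int : Integrable (fun x => √(2 * (KLdiv (κ' x) (κ x)).toReal)) ν)
    (hf : Measurable f) (hC₀ : 0 ≤ C) (hC : ∀ x, |f x| ≤ C) :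
    |∫ x, modelDiscrepancy κ κ' f x ∂ν| ≤ C * ∫ x, √(2 * (KLdiv (κ' x) (κ x)).toReal) ∂ν := by
  have he : Integrable (modelDiscrepancy κ κ' f) ν :=
    (integrable_integral_kernel ν hf hC).sub (integrable_integral_kernel ν hf hC)
  rw [← integral_const_mul]
  refine abs_integral_le_integral_abs.trans
    (integral_mono_ae he.abs (h_int.const_mul C) ?_)
  filter_upwards [h_fin] with x hx
  unfold modelDiscrepancy
  rw [abs_sub_comm]
  exact abs_integral_sub_integral_le_mul_sqrt_KLdiv hx.ne hf hC₀ hC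

end Kernel

theorem ipm_stationary_le_klTerm_add_residual_general
    {X : Type*} [MeasurableSpace X]
    (κhat κstar : Kernel X X) [IsMarkovKernel κhat] [IsMarkovKernel κstar]
    (μhat : Measure X) [IsProbabilityMeasure μhat]
    (μstar : Measure X) [IsProbabilityMeasure μstar]
    (h_inv_star : Kernel.Invariant κstar μstar)
    (μb : Measure X) [IsProbabilityMeasure μb]
    (G : Set (X → ℝ))
    (Φ : (X → ℝ) → (X → ℝ))
    (hΦ_meas : ∀ g ∈ G, Measurable (Φ g))
    (F : ℝ) (hF : 0 ≤ F) (hΦ_bdd : ∀ g ∈ G, ∀ x, |Φ g x| ≤ F)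
    (hΦ_bellman : ∀ g ∈ G, ∀ x,
      Φ g x = g x + (∫ x', Φ g x' ∂(κhat x)) - ∫ z, g z ∂μhat)
    (Ψ : (X → ℝ) → (X → ℝ))
    (hΨ_meas : ∀ g ∈ G, Measurable (Ψ g))
    (hΨ_bdd : ∀ g ∈ G, ∃ C : ℝ, ∀ x, |Ψ g x| ≤ C)
    (hΨ_bellman : ∀ g ∈ G, ∀ x,
      Ψ g x = ((∫ x', Φ g x' ∂(κhat x)) - ∫ x', Φ g x' ∂(κstar x))
        + (∫ x', Ψ g x' ∂(κstar x))
        - ∫ z, ((∫ x', Φ g x' ∂(κhat z)) - ∫ x', Φ g x' ∂(κstar z)) ∂μstar)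
    (h_kl_fin : ∀ᵐ x ∂μb, KLdiv (κstar x) (κhat x) < ⊤)
    (h_kl_int : Integrable
      (fun x => Real.sqrt (2 * (KLdiv (κstar x) (κhat x)).toReal)) μb) :
    (⨆ g : G, |(∫ x, (g : X → ℝ) x ∂μhat) - ∫ x, (g : X → ℝ) x ∂μstar|)
      ≤ F * (∫ x, Real.sqrt (2 * (KLdiv (κstar x) (κhat x)).toReal) ∂μb)
        + ⨆ g : G, |(∫ x, Ψ g x ∂μb) - ∫ x, ∫ x', Ψ (g : X → ℝ) x' ∂(κstar x) ∂μb| := by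
  set e : (X → ℝ) → X → ℝ := fun g => modelDiscrepancy κhat κstar (Φ g)
  have h_gap : ∀ g ∈ G, ∫ x, g x ∂μhat - ∫ x, g x ∂μstar = ∫ x, e g x ∂μstar := fun g hg =>
    sub_integral_eq_integral_modelDiscrepancy h_inv_star (hΦ_meas g hg) (hΦ_bdd g hg)
      (hΦ_bellman g hg)
  have h_residual : ∀ g ∈ G, ∫ x, e g x ∂μb
      = (∫ x, Ψ g x ∂μb - ∫ x, ∫ x', Ψ g x' ∂(κstar x) ∂μb) + ∫ x, e g x ∂μstar := fun g hg => by
    obtain ⟨C, hC⟩ := hΨ_bdd g hg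
    exact integral_eq_of_poisson_eq μb (hΨ_meas g hg) hC (hΨ_bellman g hg)
  have h_bdd : BddAbove (Set.range fun g : G =>
      |∫ x, Ψ g x ∂μb - ∫ x, ∫ x', Ψ (g : X → ℝ) x' ∂(κstar x) ∂μb|) := by
    refine ⟨2 * F + 2 * F, Set.forall_mem_range.2 fun ⟨g, hg⟩ => ?_⟩
    have he := abs_modelDiscrepancy_le (κ := κhat) (κ' := κstar) (hΦ_bdd g hg)
    rw [eq_sub_of_add_eq (h_residual g hg).symm]
    exact (abs_sub _ _).trans (add_le_add (abs_integral_le_of_forall_abs_le he)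
      (abs_integral_le_of_forall_abs_le he))
  refine Real.iSup_le (fun ⟨g, hg⟩ => ?_) (add_nonneg
    (mul_nonneg hF (integral_nonneg fun _ => Real.sqrt_nonneg _))
    (Real.iSup_nonneg fun _ => abs_nonneg _))
  calc |∫ x, g x ∂μhat - ∫ x, g x ∂μstar|
      = |∫ x, e g x ∂μb - (∫ x, Ψ g x ∂μb - ∫ x, ∫ x', Ψ g x' ∂(κstar x) ∂μb)| := by
        rw [h_gap g hg, h_residual g hg, add_sub_cancel_left]
    _ ≤ |∫ x, e g x ∂μb| + |∫ x, Ψ g x ∂μb - ∫ x, ∫ x', Ψ g x' ∂(κstar x) ∂μb| := abs_sub _ _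
    _ ≤ _ := add_le_add
        (abs_integral_modelDiscrepancy_le h_kl_fin h_kl_int (hΦ_meas g hg) hF (hΦ_bdd g hg))
        (le_ciSup h_bdd ⟨g, hg⟩)

/-- Theorem 3.2 (model-error bound): the IPM between the stationary distribution `μ̂` of
the learned dynamics `κ̂` and the stationary distribution `μ*` of the true dynamics `κ*`
is bounded by an expected square-root-KL model-error term plus an auxiliary
Bellman-residual term. -/
theorem ipm_stationary_le_klTerm_add_residual
    {X : Type*} [MeasurableSpace X]
    (κhat κstar : Kernel X X) [IsMarkovKernel κhat] [IsMarkovKernel κstar]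
    (μhat : Measure X) [IsProbabilityMeasure μhat]
    (h_inv_hat : Kernel.Invariant κhat μhat)
    (μstar : Measure X) [IsProbabilityMeasure μstar]
    (h_inv_star : Kernel.Invariant κstar μstar)
    (μb : Measure X) [IsProbabilityMeasure μb]
    (G : Set (X → ℝ)) (hG_ne : G.Nonempty)
    (hG_meas : ∀ g ∈ G, Measurable g)
    (Gmax : ℝ) (hG_bdd : ∀ g ∈ G, ∀ x, |g x| ≤ Gmax)
    (Φ : (X → ℝ) → (X → ℝ))
    (hΦ_meas : ∀ g ∈ G, Measurable (Φ g))
    (F : ℝ) (hF : 0 ≤ F) (hΦ_bdd : ∀ g ∈ G, ∀ x, |Φ g x| ≤ F)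
    (hΦ_bellman : ∀ g ∈ G, ∀ x,
      Φ g x = g x + (∫ x', Φ g x' ∂(κhat x)) - ∫ z, g z ∂μhat)
    (Ψ : (X → ℝ) → (X → ℝ))
    (hΨ_meas : ∀ g ∈ G, Measurable (Ψ g))
    (hΨ_bdd : ∀ g ∈ G, ∃ C : ℝ, ∀ x, |Ψ g x| ≤ C)
    (hΨ_bellman : ∀ g ∈ G, ∀ x,
      Ψ g x = ((∫ x', Φ g x' ∂(κhat x)) - ∫ x', Φ g x' ∂(κstar x))
        + (∫ x', Ψ g x' ∂(κstar x))
        - ∫ z, ((∫ x', Φ g x' ∂(κhat z)) - ∫ x', Φ g x' ∂(κstar z)) ∂μstar)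
    (h_kl_fin : ∀ᵐ x ∂μb, KLdiv (κstar x) (κhat x) < ⊤)
    (h_kl_int : Integrable
      (fun x => Real.sqrt (2 * (KLdiv (κstar x) (κhat x)).toReal)) μb) :
    (⨆ g : G, |(∫ x, (g : X → ℝ) x ∂μhat) - ∫ x, (g : X → ℝ) x ∂μstar|)
      ≤ F * (∫ x, Real.sqrt (2 * (KLdiv (κstar x) (κhat x)).toReal) ∂μb)
        + ⨆ g : G, |(∫ x, Ψ g x ∂μb) - ∫ x, ∫ x', Ψ (g : X → ℝ) x' ∂(κstar x) ∂μb| :=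
  ipm_stationary_le_klTerm_add_residual_general κhat κstar μhat μstar h_inv_star μb G Φ hΦ_meas F hF
    hΦ_bdd hΦ_bellman Ψ hΨ_meas hΨ_bdd hΨ_bellman h_kl_fin h_kl_int
end
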